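/- arXiv:2211.10601 — 2 statements merged into one kernel-verified Lean document; each statement's English description precedes it below -/
import Mathlib

section
/- Let P₀ and P₁ be self-adjoint projections on a Hilbert space forming a Fredholm pair, i.e., the image of P₀ - P₁ in the Calkin algebra has norm strictly less than 1. Then Ind(P₀,P₁) = dim(Ran(P₀) ∩ Ker(P₁)) - dim(Ker(P₀) ∩ Ran(P₁)), where Ind(P₀,P₁) is the Fredholm index of P₁ restricted to Ran(P₀), viewed as a map Ran(P₀) → Ran(P₁). -/
/-! On `Ran P₀` we have `(1 - ‖P₀ - P₁ - K‖) ‖x‖ ≤ ‖P₁ x‖ + ‖K x‖`, so `P₁|_{Ran P₀}` is bounded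
below modulo a compact operator: its kernel `Ran P₀ ∩ Ker P₁` is finite-dimensional and its range
`P₁(Ran P₀)` is closed. Algebraically the cokernel `Ran P₁ / P₁(Ran P₀)` is `H / (Ran P₀ + Ker P₁)`,
and `Ran P₀ + Ker P₁ = P₁⁻¹(P₁(Ran P₀))` is closed, so this quotient is its orthogonal complement
`Ker P₀ ∩ Ran P₁`. Exchanging `P₀` and `P₁` shows that this space is finite-dimensional as well. -/

/-- The restriction `P₁|_{Ran(P₀)} : Ran(P₀) → Ran(P₁)`. -/
noncomputable def projRestrict {H : Type*} [NormedAddCommGroup H] [InnerProductSpace ℂ H]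
    (P₀ P₁ : H →L[ℂ] H) :
    (LinearMap.range (P₀ : H →ₗ[ℂ] H)) →ₗ[ℂ] (LinearMap.range (P₁ : H →ₗ[ℂ] H)) :=
  LinearMap.restrict (P₁ : H →ₗ[ℂ] H) (fun x _ => LinearMap.mem_range_self (P₁ : H →ₗ[ℂ] H) x)

/-- The index of the pair `(P₀, P₁)`: the Fredholm index of `P₁|_{Ran(P₀)}`,
i.e. `dim ker - dim coker` of the restricted map. -/
noncomputable def projIndex {H : Type*} [NormedAddCommGroup H] [InnerProductSpace ℂ H]
    (P₀ P₁ : H →L[ℂ] H) : ℤ :=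
  (Module.finrank ℂ (LinearMap.ker (projRestrict P₀ P₁)) : ℤ) -
    (Module.finrank ℂ
      ((LinearMap.range (P₁ : H →ₗ[ℂ] H)) ⧸ LinearMap.range (projRestrict P₀ P₁)) : ℤ)

open Filter Topology Function

section LinearAlgebra

open LinearMap

variable {R M N : Type*} [Ring R] [AddCommGroup M] [AddCommGroup N] [Module R M] [Module R N]

noncomputable def LinearMap.quotientComapEquivOfSurjective (g : M →ₗ[R] N) (hg : Surjective g)
    (W : Submodule R N) : (M ⧸ W.comap g) ≃ₗ[R] N ⧸ W :=
  (Submodule.quotEquivOfEq _ _ (by rw [ker_comp, Submodule.ker_mkQ])).trans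
    ((W.mkQ ∘ₗ g).quotKerEquivOfSurjective (W.mkQ_surjective.comp hg))

noncomputable def LinearMap.kerCompSubtypeEquiv (f : M →ₗ[R] N) (U : Submodule R M) :
    ker (f ∘ₗ U.subtype) ≃ₗ[R] ↥(U ⊓ ker f) :=
  ((ker (f ∘ₗ U.subtype)).equivMapOfInjective U.subtype U.injective_subtype).trans
    (LinearEquiv.ofEq _ _ (by rw [ker_comp, Submodule.map_comap_subtype]))

noncomputable def LinearMap.kerRangeRestrictCompSubtypeEquiv (f : M →ₗ[R] N)
    (U : Submodule R M) : ker (f.rangeRestrict ∘ₗ U.subtype) ≃ₗ[R] ↥(U ⊓ ker f) :=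
  (LinearEquiv.ofEq _ _ (by rw [ker_comp, ker_comp, ker_rangeRestrict])).trans
    (f.kerCompSubtypeEquiv U)

noncomputable def LinearMap.quotientRangeRestrictCompSubtypeEquiv (f : M →ₗ[R] N)
    (U : Submodule R M) :
    (range f ⧸ range (f.rangeRestrict ∘ₗ U.subtype)) ≃ₗ[R] M ⧸ (U ⊔ ker f) :=
  (Submodule.quotEquivOfEq _ _ (by rw [range_comp, Submodule.range_subtype])).trans <|
    (f.rangeRestrict.quotientComapEquivOfSurjective f.surjective_rangeRestrict _).symm.trans
      (Submodule.quotEquivOfEq _ _ (by rw [Submodule.comap_map_eq, ker_rangeRestrict]))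

end LinearAlgebra

section CompactKernel

variable {𝕜 E F G : Type*} [NontriviallyNormedField 𝕜]
  [NormedAddCommGroup E] [NormedSpace 𝕜 E]
  [NormedAddCommGroup F] [NormedSpace 𝕜 F] [NormedAddCommGroup G] [NormedSpace 𝕜 G]
  {A : E →L[𝕜] F} {K : E →L[𝕜] G} {ε : ℝ}

theorem ContinuousLinearMap.exists_antilipschitzWith_prod_of_mul_norm_le (hε : 0 < ε)
    (h : ∀ x, ε * ‖x‖ ≤ ‖A x‖ + ‖K x‖) : ∃ C, AntilipschitzWith C (A.prod K) := by
  refine antilipschitzWith_iff_exists_mul_le_norm.2 ⟨ε / 2, by positivity, fun x => ?_⟩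
  rw [ContinuousLinearMap.prod_apply, Prod.norm_def]
  linarith [h x, le_max_left ‖A x‖ ‖K x‖, le_max_right ‖A x‖ ‖K x‖]

variable [CompleteSpace 𝕜] [CompleteSpace E]

theorem IsCompactOperator.finiteDimensional_of_mul_norm_le (hK : IsCompactOperator K)
    (hε : 0 < ε) (h : ∀ x, ε * ‖x‖ ≤ ‖K x‖) : FiniteDimensional 𝕜 E := by
  obtain ⟨C, hC⟩ := antilipschitzWith_iff_exists_mul_le_norm.2 ⟨ε, hε, h⟩
  obtain ⟨L, hL, hKL⟩ := hK
  exact FiniteDimensional.of_isCompactOperator_id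
    ⟨K ⁻¹' L, (hC.isClosedEmbedding K.uniformContinuous).isCompact_preimage hL, hKL⟩

theorem IsCompactOperator.finiteDimensional_ker_of_mul_norm_le (hK : IsCompactOperator K)
    (hε : 0 < ε) (h : ∀ x, ε * ‖x‖ ≤ ‖A x‖ + ‖K x‖) :
    FiniteDimensional 𝕜 (LinearMap.ker (A : E →ₗ[𝕜] F)) := by
  set W := LinearMap.ker (A : E →ₗ[𝕜] F)
  have := A.isClosed_ker.completeSpace_coe
  refine (hK.comp_clm W.subtypeL).finiteDimensional_of_mul_norm_le (K := K ∘L W.subtypeL) hε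
    fun x => ?_
  simpa [x.2] using h x

end CompactKernel

section ProjectionPairKernel

variable {𝕜 E : Type*} [NontriviallyNormedField 𝕜] [NormedAddCommGroup E] [NormedSpace 𝕜 E]
  {P₀ P₁ K : E →L[𝕜] E}

theorem mul_norm_le_norm_add_norm_of_mem_range (hp₀ : IsIdempotentElem P₀) {x : E}
    (hx : x ∈ LinearMap.range (P₀ : E →ₗ[𝕜] E)) :
    (1 - ‖P₀ - P₁ - K‖) * ‖x‖ ≤ ‖P₁ x‖ + ‖K x‖ := by
  have hP₀x : P₀ x = x :=
    (LinearMap.IsIdempotentElem.mem_range_iff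
      (ContinuousLinearMap.IsIdempotentElem.toLinearMap hp₀)).1 hx
  have hsplit : x = P₁ x + (P₀ - P₁ - K) x + K x := by
    simp only [sub_apply, hP₀x]; abel
  have := norm_add₃_le (a := P₁ x) (b := (P₀ - P₁ - K) x) (c := K x)
  rw [← hsplit] at this
  linarith [(P₀ - P₁ - K).le_opNorm x]

variable [CompleteSpace 𝕜] [CompleteSpace E]

theorem finiteDimensional_range_inf_ker_of_norm_sub_sub_lt_one (hp₀ : IsIdempotentElem P₀)
    (hK : IsCompactOperator K) (h : ‖P₀ - P₁ - K‖ < 1) :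
    FiniteDimensional 𝕜
      ↥(LinearMap.range (P₀ : E →ₗ[𝕜] E) ⊓ LinearMap.ker (P₁ : E →ₗ[𝕜] E)) := by
  set V := LinearMap.range (P₀ : E →ₗ[𝕜] E)
  have := (ContinuousLinearMap.IsIdempotentElem.isClosed_range hp₀).completeSpace_coe
  have : FiniteDimensional 𝕜 (LinearMap.ker ((P₁ : E →ₗ[𝕜] E) ∘ₗ V.subtype)) :=
    (hK.comp_clm V.subtypeL).finiteDimensional_ker_of_mul_norm_le (A := P₁ ∘L V.subtypeL)
      (K := K ∘L V.subtypeL) (sub_pos.2 h) fun x => mul_norm_le_norm_add_norm_of_mem_range hp₀ x.2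
  exact ((P₁ : E →ₗ[𝕜] E).kerCompSubtypeEquiv V).finiteDimensional

end ProjectionPairKernel

section ClosedRange

variable {𝕜 E F G : Type*} [RCLike 𝕜]
  [NormedAddCommGroup E] [NormedSpace 𝕜 E]
  [NormedAddCommGroup F] [NormedSpace 𝕜 F] [NormedAddCommGroup G] [NormedSpace 𝕜 G]
  {A : E →L[𝕜] F} {K : E →L[𝕜] G} {ε : ℝ}

theorem ContinuousLinearMap.exists_seq_norm_eq_one_tendsto_zero
    (h : ¬∃ δ > 0, ∀ x, δ * ‖x‖ ≤ ‖A x‖) :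
    ∃ u : ℕ → E, (∀ n, ‖u n‖ = 1) ∧ Tendsto (A ∘ u) atTop (𝓝 0) := by
  push Not at h
  choose x hx using fun n : ℕ => h (1 / ((n : ℝ) + 1)) (by positivity)
  have hx0 : ∀ n, x n ≠ 0 := fun n h0 => by simpa [h0] using hx n
  refine ⟨fun n => (‖x n‖⁻¹ : 𝕜) • x n, fun n => norm_smul_inv_norm (hx0 n), ?_⟩
  refine squeeze_zero_norm (fun n => ?_) tendsto_one_div_add_atTop_nhds_zero_nat
  have hpos : 0 < ‖x n‖ := norm_pos_iff.2 (hx0 n)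
  rw [Function.comp_apply, map_smul, norm_smul, norm_inv, RCLike.norm_ofReal, abs_norm,
    inv_mul_le_iff₀ hpos, mul_comm]
  exact (hx n).le

variable [CompleteSpace E]

theorem IsCompactOperator.exists_mul_norm_le_of_injective (hK : IsCompactOperator K)
    (hε : 0 < ε) (h : ∀ x, ε * ‖x‖ ≤ ‖A x‖ + ‖K x‖) (hA : Injective A) :
    ∃ δ > 0, ∀ x, δ * ‖x‖ ≤ ‖A x‖ := by
  by_contra hA'
  obtain ⟨u, hu, huA⟩ := A.exists_seq_norm_eq_one_tendsto_zero hA'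
  obtain ⟨L, hL, hKL⟩ := hK.image_closedBall_subset_compact 1
  obtain ⟨z, -, φ, hφ, hz⟩ := hL.tendsto_subseq fun n => hKL ⟨u n, by simp [hu], rfl⟩
  -- `(A, K)` is a closed embedding, so `u ∘ φ` converges to the preimage of `(0, z)`, which is `0`.
  obtain ⟨C, hC⟩ := A.exists_antilipschitzWith_prod_of_mul_norm_le hε h
  have hΦ := hC.isClosedEmbedding (A.prod K).uniformContinuous
  have hlim : Tendsto (A.prod K ∘ u ∘ φ) atTop (𝓝 (0, z)) :=
    (huA.comp hφ.tendsto_atTop).prodMk_nhds hz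
  obtain ⟨x, hx⟩ : (0, z) ∈ Set.range (A.prod K) :=
    hΦ.isClosed_range.mem_of_tendsto hlim (Eventually.of_forall fun n => Set.mem_range_self _)
  obtain rfl : x = 0 := hA (by simpa using congrArg Prod.fst hx)
  have hu0 : Tendsto (u ∘ φ) atTop (𝓝 0) := hΦ.isInducing.tendsto_nhds_iff.2 (hx ▸ hlim)
  simpa [Function.comp_def, hu] using hu0.norm

theorem IsCompactOperator.isClosed_range_of_mul_norm_le (hK : IsCompactOperator K)
    (hε : 0 < ε) (h : ∀ x, ε * ‖x‖ ≤ ‖A x‖ + ‖K x‖) :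
    IsClosed (LinearMap.range (A : E →ₗ[𝕜] F) : Set F) := by
  have := hK.finiteDimensional_ker_of_mul_norm_le hε h
  obtain ⟨C, hC, hcompl⟩ := (Submodule.ClosedComplemented.of_finiteDimensional
    (LinearMap.ker (A : E →ₗ[𝕜] F))).exists_isClosed_isCompl
  have := hC.completeSpace_coe
  have hinj : Injective (A ∘L C.subtypeL) := (injective_iff_map_eq_zero _).2 fun x hx =>
    Subtype.ext (Submodule.disjoint_def.1 hcompl.disjoint x hx x.2)
  obtain ⟨δ, hδ, hAC⟩ := (hK.comp_clm C.subtypeL).exists_mul_norm_le_of_injective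
    (A := A ∘L C.subtypeL) (K := K ∘L C.subtypeL) hε (fun x => h x) hinj
  obtain ⟨c, hc⟩ := antilipschitzWith_iff_exists_mul_le_norm.2 ⟨δ, hδ, hAC⟩
  have hrange : LinearMap.range (A : E →ₗ[𝕜] F) =
      LinearMap.range ((A : E →ₗ[𝕜] F) ∘ₗ C.subtype) := by
    rw [LinearMap.range_comp, Submodule.range_subtype, LinearMap.range_eq_map,
      ← hcompl.sup_eq_top, Submodule.map_sup, LinearMap.le_ker_iff_map.mp le_rfl, bot_sup_eq]
  rw [hrange, LinearMap.coe_range]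
  exact hc.isClosed_range (A ∘L C.subtypeL).uniformContinuous

end ClosedRange

section ProjectionPairRange

variable {𝕜 E : Type*} [RCLike 𝕜] [NormedAddCommGroup E] [NormedSpace 𝕜 E] [CompleteSpace E]
  {P₀ P₁ K : E →L[𝕜] E}

theorem isClosed_map_range_of_norm_sub_sub_lt_one (hp₀ : IsIdempotentElem P₀)
    (hK : IsCompactOperator K) (h : ‖P₀ - P₁ - K‖ < 1) :
    IsClosed (Submodule.map (P₁ : E →ₗ[𝕜] E) (LinearMap.range (P₀ : E →ₗ[𝕜] E)) : Set E) := by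
  set V := LinearMap.range (P₀ : E →ₗ[𝕜] E)
  have := (ContinuousLinearMap.IsIdempotentElem.isClosed_range hp₀).completeSpace_coe
  have := (hK.comp_clm V.subtypeL).isClosed_range_of_mul_norm_le (A := P₁ ∘L V.subtypeL)
    (K := K ∘L V.subtypeL) (sub_pos.2 h) fun x => mul_norm_le_norm_add_norm_of_mem_range hp₀ x.2
  rwa [ContinuousLinearMap.toLinearMap_comp, Submodule.toLinearMap_subtypeL,
    LinearMap.range_comp, Submodule.range_subtype] at this

end ProjectionPairRange

section Orthogonal

variable {𝕜 E : Type*} [RCLike 𝕜] [NormedAddCommGroup E] [InnerProductSpace 𝕜 E] [CompleteSpace E]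
  {P₀ P₁ : E →L[𝕜] E}

theorem IsSelfAdjoint.orthogonal_ker_eq_range (h₁ : IsSelfAdjoint P₁) (hp₁ : IsIdempotentElem P₁) :
    (LinearMap.ker (P₁ : E →ₗ[𝕜] E))ᗮ = LinearMap.range (P₁ : E →ₗ[𝕜] E) := by
  have := (ContinuousLinearMap.IsIdempotentElem.isClosed_range hp₁).completeSpace_coe
  rw [← h₁.isSymmetric.orthogonal_range, Submodule.orthogonal_orthogonal]

theorem orthogonal_range_sup_ker (h₀ : IsSelfAdjoint P₀) (h₁ : IsSelfAdjoint P₁)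
    (hp₁ : IsIdempotentElem P₁) :
    (LinearMap.range (P₀ : E →ₗ[𝕜] E) ⊔ LinearMap.ker (P₁ : E →ₗ[𝕜] E))ᗮ =
      LinearMap.ker (P₀ : E →ₗ[𝕜] E) ⊓ LinearMap.range (P₁ : E →ₗ[𝕜] E) := by
  rw [← Submodule.inf_orthogonal, h₀.isSymmetric.orthogonal_range,
    h₁.orthogonal_ker_eq_range hp₁]

end Orthogonal

/-- If `(P₀, P₁)` is a Fredholm pair of self-adjoint projections (i.e. `‖P₀ - P₁‖ < 1`
modulo compact operators), then the kernel and cokernel of `P₁|_{Ran(P₀)}` are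
finite-dimensional and
`Ind(P₀, P₁) = dim(Ran(P₀) ∩ Ker(P₁)) - dim(Ker(P₀) ∩ Ran(P₁))`. -/
theorem projIndex_eq_dim_sub_dim {H : Type*} [NormedAddCommGroup H] [InnerProductSpace ℂ H]
    [CompleteSpace H] (P₀ P₁ : H →L[ℂ] H)
    (h₀ : IsSelfAdjoint P₀) (h₁ : IsSelfAdjoint P₁)
    (hp₀ : P₀ * P₀ = P₀) (hp₁ : P₁ * P₁ = P₁)
    (hFred : ∃ K : H →L[ℂ] H, IsCompactOperator ⇑K ∧ ‖P₀ - P₁ - K‖ < 1) :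
    FiniteDimensional ℂ (LinearMap.ker (projRestrict P₀ P₁)) ∧
    FiniteDimensional ℂ ((LinearMap.range (P₁ : H →ₗ[ℂ] H)) ⧸ LinearMap.range (projRestrict P₀ P₁)) ∧
    FiniteDimensional ℂ (LinearMap.range (P₀ : H →ₗ[ℂ] H) ⊓ LinearMap.ker (P₁ : H →ₗ[ℂ] H) : Submodule ℂ H) ∧
    FiniteDimensional ℂ (LinearMap.ker (P₀ : H →ₗ[ℂ] H) ⊓ LinearMap.range (P₁ : H →ₗ[ℂ] H) : Submodule ℂ H) ∧
    projIndex P₀ P₁ =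
      (Module.finrank ℂ (LinearMap.range (P₀ : H →ₗ[ℂ] H) ⊓ LinearMap.ker (P₁ : H →ₗ[ℂ] H) : Submodule ℂ H) : ℤ) -
        (Module.finrank ℂ (LinearMap.ker (P₀ : H →ₗ[ℂ] H) ⊓ LinearMap.range (P₁ : H →ₗ[ℂ] H) : Submodule ℂ H) : ℤ) := by
  obtain ⟨K, hK, hlt⟩ := hFred
  have hM := finiteDimensional_range_inf_ker_of_norm_sub_sub_lt_one hp₀ hK hlt
  have hN : FiniteDimensional ℂ
      ↥(LinearMap.ker (P₀ : H →ₗ[ℂ] H) ⊓ LinearMap.range (P₁ : H →ₗ[ℂ] H)) := by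
    rw [inf_comm]
    refine finiteDimensional_range_inf_ker_of_norm_sub_sub_lt_one hp₁ (K := -K)
      (by simpa using hK.neg) ?_
    rwa [show P₁ - P₀ - -K = -(P₀ - P₁ - K) by abel, norm_neg]
  have hS : IsClosed ((LinearMap.range (P₀ : H →ₗ[ℂ] H) ⊔
      LinearMap.ker (P₁ : H →ₗ[ℂ] H) : Submodule ℂ H) : Set H) := by
    rw [← Submodule.comap_map_eq]
    exact (isClosed_map_range_of_norm_sub_sub_lt_one hp₀ hK hlt).preimage P₁.continuous
  have := hS.completeSpace_coe
  -- `projRestrict P₀ P₁` is definitionally `P₁.rangeRestrict ∘ₗ (range P₀).subtype`.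
  let eKer : LinearMap.ker (projRestrict P₀ P₁) ≃ₗ[ℂ]
      ↥(LinearMap.range (P₀ : H →ₗ[ℂ] H) ⊓ LinearMap.ker (P₁ : H →ₗ[ℂ] H)) :=
    (P₁ : H →ₗ[ℂ] H).kerRangeRestrictCompSubtypeEquiv _
  let eCoker : (LinearMap.range (P₁ : H →ₗ[ℂ] H) ⧸ LinearMap.range (projRestrict P₀ P₁)) ≃ₗ[ℂ]
      ↥(LinearMap.ker (P₀ : H →ₗ[ℂ] H) ⊓ LinearMap.range (P₁ : H →ₗ[ℂ] H)) :=
    ((P₁ : H →ₗ[ℂ] H).quotientRangeRestrictCompSubtypeEquiv _).trans <|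
      (Submodule.quotientEquivOrthogonal _).toLinearEquiv.trans
        (LinearEquiv.ofEq _ _ (orthogonal_range_sup_ker h₀ h₁ hp₁))
  exact ⟨eKer.symm.finiteDimensional, eCoker.symm.finiteDimensional, hM, hN, by
    rw [projIndex, eKer.finrank_eq, eCoker.finrank_eq]⟩
end

section
/- Let P₀, P₁ be self-adjoint projections on a finite-dimensional Hilbert space. Then Tr(P₀ - P₁) = dim(Ran(P₀) ∩ Ker(P₁)) - dim(Ker(P₀) ∩ Ran(P₁)). -/
/-!
Restricting `P₁` to `Ran P₀` and applying rank–nullity gives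
`Tr P₀ = rank P₀ = dim (Ran P₀ ∩ Ker P₁) + rank (P₁ P₀)`, and symmetrically
`Tr P₁ = dim (Ran P₁ ∩ Ker P₀) + rank (P₀ P₁)`. For self-adjoint `P₀, P₁` the operator `P₀ P₁` is
the adjoint of `P₁ P₀`, so the two ranks agree and cancel in `Tr (P₀ - P₁)`.
-/

open Module LinearMap

theorem Submodule.finrank_inf_ker_add_finrank_map {K V W : Type*} [DivisionRing K]
    [AddCommGroup V] [Module K V] [AddCommGroup W] [Module K W]
    (f : V →ₗ[K] W) (U : Submodule K V) [FiniteDimensional K U] :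
    finrank K ↥(U ⊓ ker f) + finrank K ↥(U.map f) = finrank K U := by
  have hker : ker (f.domRestrict U) = (U ⊓ ker f).comap U.subtype := by
    rw [ker_domRestrict, Submodule.comap_inf, Submodule.comap_subtype_self, top_inf_eq]
  rw [← (Submodule.comapSubtypeEquivOfLe inf_le_left).finrank_eq, ← hker, ← range_domRestrict,
    add_comm, finrank_range_add_finrank_ker]

namespace LinearMap

section Idempotent

variable {K V : Type*} [Field K] [AddCommGroup V] [Module K V] [FiniteDimensional K V]

theorem trace_eq_finrank_inf_ker_add_finrank_range_comp {p : V →ₗ[K] V}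
    (hp : IsIdempotentElem p) (q : V →ₗ[K] V) :
    trace K V p = finrank K ↥(range p ⊓ ker q) + finrank K (range (q ∘ₗ p)) := by
  rw [hp.isProj_range.trace, range_comp, ← Submodule.finrank_inf_ker_add_finrank_map q,
    Nat.cast_add]

theorem trace_sub_of_isIdempotentElem {p q : V →ₗ[K] V} (hp : IsIdempotentElem p)
    (hq : IsIdempotentElem q) (h : finrank K (range (q ∘ₗ p)) = finrank K (range (p ∘ₗ q))) :
    trace K V (p - q) = finrank K ↥(range p ⊓ ker q) - finrank K ↥(ker p ⊓ range q) := by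
  rw [map_sub, trace_eq_finrank_inf_ker_add_finrank_range_comp hp q,
    trace_eq_finrank_inf_ker_add_finrank_range_comp hq p, h, inf_comm (ker p)]
  ring

end Idempotent

theorem IsSymmetric.finrank_range_comp_comm {𝕜 E : Type*} [RCLike 𝕜] [NormedAddCommGroup E]
    [InnerProductSpace 𝕜 E] [FiniteDimensional 𝕜 E] {p q : E →ₗ[𝕜] E} (hp : p.IsSymmetric)
    (hq : q.IsSymmetric) : finrank 𝕜 (range (q ∘ₗ p)) = finrank 𝕜 (range (p ∘ₗ q)) := by
  rw [← finrank_range_adjoint, adjoint_comp, hp.adjoint_eq, hq.adjoint_eq]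

end LinearMap

theorem trace_diff_projections_general {H : Type*} [NormedAddCommGroup H] [InnerProductSpace ℂ H]
    [FiniteDimensional ℂ H]
    (P₀ P₁ : H →L[ℂ] H) (h₀ : IsSelfAdjoint P₀) (h₁ : IsSelfAdjoint P₁)
    (hp₀ : P₀ * P₀ = P₀) (hp₁ : P₁ * P₁ = P₁) :
    LinearMap.trace ℂ H ((P₀ : H →ₗ[ℂ] H) - (P₁ : H →ₗ[ℂ] H)) =
      (Module.finrank ℂ (LinearMap.range (P₀ : H →ₗ[ℂ] H) ⊓ LinearMap.ker (P₁ : H →ₗ[ℂ] H) : Submodule ℂ H) : ℂ) -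
        (Module.finrank ℂ (LinearMap.ker (P₀ : H →ₗ[ℂ] H) ⊓ LinearMap.range (P₁ : H →ₗ[ℂ] H) : Submodule ℂ H) : ℂ) :=
  trace_sub_of_isIdempotentElem (ContinuousLinearMap.IsIdempotentElem.toLinearMap hp₀)
    (ContinuousLinearMap.IsIdempotentElem.toLinearMap hp₁)
    (h₀.isSymmetric.finrank_range_comp_comm h₁.isSymmetric)

/-- For self-adjoint projections `P₀, P₁` on a finite-dimensional Hilbert space,
`Tr(P₀ - P₁) = dim(Ran(P₀) ∩ Ker(P₁)) - dim(Ker(P₀) ∩ Ran(P₁))`. -/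
theorem trace_diff_projections {H : Type*} [NormedAddCommGroup H] [InnerProductSpace ℂ H]
    [CompleteSpace H] [FiniteDimensional ℂ H]
    (P₀ P₁ : H →L[ℂ] H) (h₀ : IsSelfAdjoint P₀) (h₁ : IsSelfAdjoint P₁)
    (hp₀ : P₀ * P₀ = P₀) (hp₁ : P₁ * P₁ = P₁) :
    LinearMap.trace ℂ H ((P₀ : H →ₗ[ℂ] H) - (P₁ : H →ₗ[ℂ] H)) =
      (Module.finrank ℂ (LinearMap.range (P₀ : H →ₗ[ℂ] H) ⊓ LinearMap.ker (P₁ : H →ₗ[ℂ] H) : Submodule ℂ H) : ℂ) -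
        (Module.finrank ℂ (LinearMap.ker (P₀ : H →ₗ[ℂ] H) ⊓ LinearMap.range (P₁ : H →ₗ[ℂ] H) : Submodule ℂ H) : ℂ) :=
  trace_diff_projections_general P₀ P₁ h₀ h₁ hp₀ hp₁
end
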